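/- arXiv:1501.01360 — 6 statements merged into one kernel-verified Lean document; each statement's English description precedes it below -/
import Mathlib

section
/- If C is a Z4-linear code of length r+s that is closed under the simultaneous cyclic shift on the first r coordinates and the last s coordinates, then its dual code C⊥ (with respect to the standard inner product on Z4^(r+s)) is also closed under this simultaneous cyclic shift. -/
open Polynomial

abbrev Z4 := ZMod 4

abbrev Rq (n : ℕ) := Polynomial Z4 ⧸ Ideal.span ({(X : Polynomial Z4) ^ n - 1} : Set (Polynomial Z4))

noncomputable def mkQ (n : ℕ) (p : Polynomial Z4) : Rq n := Ideal.Quotient.mk _ p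

noncomputable def toPoly {n : ℕ} (c : Fin n → Z4) : Polynomial Z4 :=
  ∑ i, Polynomial.C (c i) * X ^ (i : ℕ)

noncomputable def tau {r s : ℕ} (c : (Fin r → Z4) × (Fin s → Z4)) : Rq r × Rq s :=
  (mkQ r (toPoly c.1), mkQ s (toPoly c.2))

def shiftT {r s : ℕ} (c : (Fin r → Z4) × (Fin s → Z4)) : (Fin r → Z4) × (Fin s → Z4) :=
  (fun i => c.1 ((finRotate r).symm i), fun j => c.2 ((finRotate s).symm j))

def innerProd {r s : ℕ} (c c' : (Fin r → Z4) × (Fin s → Z4)) : Z4 :=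
  ∑ i, c.1 i * c'.1 i + ∑ j, c.2 j * c'.2 j

/-!
The shift permutes the coordinates of both blocks, so it preserves the inner product. The
ambient space is finite, so the injective shift maps a shift-closed code `C` onto itself: every
`c ∈ C` is `shiftT d` with `d ∈ C`, and then `c · shiftT c' = d · c' = 0`.
-/

theorem shiftT_injective {r s : ℕ} : Function.Injective (shiftT (r := r) (s := s)) := by
  intro a b h
  ext i
  · simpa only [shiftT, Equiv.symm_apply_apply] using congrFun (congrArg Prod.fst h) (finRotate r i)
  · simpa only [shiftT, Equiv.symm_apply_apply] using congrFun (congrArg Prod.snd h) (finRotate s i)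

theorem innerProd_shiftT_shiftT {r s : ℕ} (c c' : (Fin r → Z4) × (Fin s → Z4)) :
    innerProd (shiftT c) (shiftT c') = innerProd c c' := by
  unfold innerProd shiftT
  congr 1
  · exact Equiv.sum_comp (finRotate r).symm fun i => c.1 i * c'.1 i
  · exact Equiv.sum_comp (finRotate s).symm fun j => c.2 j * c'.2 j

theorem exists_shiftT_eq_of_mapsTo {r s : ℕ} {S : Set ((Fin r → Z4) × (Fin s → Z4))}
    (hS : Set.MapsTo shiftT S S) {c : (Fin r → Z4) × (Fin s → Z4)} (hc : c ∈ S) :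
    ∃ d ∈ S, shiftT d = c :=
  (((Set.toFinite S).injOn_iff_bijOn_of_mapsTo hS).mp shiftT_injective.injOn).surjOn hc

/-- the dual of a double cyclic code over `Z4` is again closed under the
simultaneous cyclic shift. -/
theorem stmt_0 (r s : ℕ)
    (C : Submodule Z4 ((Fin r → Z4) × (Fin s → Z4)))
    (hC : ∀ c ∈ C, shiftT c ∈ C) :
    ∀ c' : (Fin r → Z4) × (Fin s → Z4),
      (∀ c ∈ C, innerProd c c' = 0) → (∀ c ∈ C, innerProd c (shiftT c') = 0) := by
  intro c' hdual c hc
  obtain ⟨d, hd, rfl⟩ := exists_shiftT_eq_of_mapsTo hC hc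
  rw [innerProd_shiftT_shiftT]
  exact hdual d hd
end

section
/- Every double cyclic code C of length (r,s) over Z4, viewed as a Z4[x]-submodule of Z4[x]/(x^r−1) × Z4[x]/(x^s−1), is generated by two elements of the form (f1(x)+2g1(x) | 0) and (l(x) | f2(x)+2g2(x)), where g1 divides f1 divides x^r−1 and g2 divides f2 divides x^s−1 in Z4[x]. -/
open Polynomial

abbrev F2 := ZMod 2
noncomputable def rho : Polynomial Z4 →+* Polynomial F2 :=
  mapRingHom (ZMod.castHom (by norm_num : (2:ℕ) ∣ 4) F2)

lemma cast_surj : Function.Surjective (ZMod.castHom (by norm_num : (2:ℕ) ∣ 4) F2) := by decide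

lemma rho_surj : Function.Surjective rho := Polynomial.map_surjective _ cast_surj

lemma C2_eq : (C (2:Z4) : Polynomial Z4) = 2 := map_ofNat C 2

lemma two_mul_two : (2 : Polynomial Z4) * 2 = 0 := by
  have h4 : (4 : Polynomial Z4) = C (4:Z4) := (map_ofNat C 4).symm
  have h : (2 : Polynomial Z4) * 2 = 4 := by norm_num
  rw [h, h4, show (4:Z4) = 0 by decide, map_zero]

lemma ker_rho {p : Polynomial Z4} (h : rho p = 0) : ∃ q, p = 2 * q := by
  have hker : RingHom.ker (ZMod.castHom (by norm_num : (2:ℕ) ∣ 4) F2) = Ideal.span {2} := by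
    ext a
    simp only [RingHom.mem_ker, Ideal.mem_span_singleton, dvd_def]
    revert a; decide
  have hp : p ∈ RingHom.ker (mapRingHom (ZMod.castHom (by norm_num : (2:ℕ) ∣ 4) F2)) := h
  rw [Polynomial.ker_mapRingHom, hker, Ideal.map_span] at hp
  simp only [Set.image_singleton, Ideal.mem_span_singleton] at hp
  obtain ⟨q, hq⟩ := hp
  exact ⟨q, by rw [hq, C2_eq]⟩

lemma rho_two_eq_zero : rho 2 = 0 := by
  rw [show (2:Polynomial Z4) = C 2 from C2_eq.symm]
  show map _ _ = 0
  rw [map_C, show (ZMod.castHom (by norm_num : (2:ℕ) ∣ 4) F2) 2 = 0 by decide, Polynomial.C_0]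

lemma rho_X_pow_sub_one (n : ℕ) : rho (X^n - 1) = X^n - 1 := by
  show map _ _ = _
  simp [Polynomial.map_sub, Polynomial.map_pow]

lemma squarefree_xn_sub_one {n : ℕ} (hn : Odd n) : Squarefree ((X:Polynomial F2)^n - 1) := by
  have hn1 : 1 ≤ n := hn.pos
  apply Polynomial.Separable.squarefree
  unfold Polynomial.Separable
  have hd : derivative ((X:Polynomial F2)^n - 1) = X^(n-1) := by
    rw [derivative_sub, derivative_one, derivative_X_pow, sub_zero]
    have : ((n : F2)) = 1 := by
      rcases hn with ⟨k, hk⟩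
      subst hk; push_cast
      rw [show (2:F2) = 0 by decide]
      ring
    rw [this, C_1, one_mul]
  rw [hd]
  refine ⟨-1, X, ?_⟩
  have : (X:Polynomial F2) * X^(n-1) = X^n := by
    rw [← pow_succ']
    congr 1; omega
  rw [this]; ring

lemma hensel {F : Polynomial Z4} {a b : Polynomial F2} (hco : IsCoprime a b)
    (hF : rho F = a * b) :
    ∃ A B : Polynomial Z4, rho A = a ∧ rho B = b ∧ F = A * B := by
  obtain ⟨a0, ha0⟩ := rho_surj a
  obtain ⟨b0, hb0⟩ := rho_surj b
  obtain ⟨t, ht⟩ : ∃ t, F - a0*b0 = 2*t :=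
    ker_rho (by rw [map_sub, map_mul, ha0, hb0, hF, sub_self])
  obtain ⟨c, d, hcd⟩ := hco
  obtain ⟨c0, hc0⟩ := rho_surj c
  obtain ⟨d0, hd0⟩ := rho_surj d
  obtain ⟨u, hu⟩ : ∃ u, (c0*a0 + d0*b0) - 1 = 2*u :=
    ker_rho (by rw [map_sub, map_add, map_mul, map_mul, hc0, hd0, ha0, hb0, map_one, hcd, sub_self])
  set c' := c0*(1-2*u) with hc'
  set d' := d0*(1-2*u) with hd'
  have h1 : c'*a0 + d'*b0 = 1 := by
    have tm := two_mul_two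
    linear_combination (1-2*u)*hu - u*u*tm
  refine ⟨a0 + 2*(d'*t), b0 + 2*(c'*t), ?_, ?_, ?_⟩
  · rw [map_add, map_mul, map_mul, rho_two_eq_zero, zero_mul, add_zero, ha0]
  · rw [map_add, map_mul, map_mul, rho_two_eq_zero, zero_mul, add_zero, hb0]
  · have tm := two_mul_two
    linear_combination ht - 2*t*h1 - (c'*d'*t*t)*tm

lemma ideal_structure {n : ℕ} (hn : Odd n) (J : Ideal (Polynomial Z4))
    (hJ : (X:Polynomial Z4)^n - 1 ∈ J) :
    ∃ f g : Polynomial Z4, g ∣ f ∧ f ∣ (X^n - 1) ∧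
      J = Ideal.span {f + 2*g} ⊔ Ideal.span {(X:Polynomial Z4)^n - 1} := by
  have tm := two_mul_two
  set M : Polynomial F2 := X^n - 1 with hM
  have sf : Squarefree M := squarefree_xn_sub_one hn
  have hrhoM : rho ((X:Polynomial Z4)^n - 1) = M := rho_X_pow_sub_one n
  -- the ideal Jbar
  obtain ⟨fbar, hfbar⟩ := (IsPrincipalIdealRing.principal (J.map rho)).principal
  rw [Ideal.submodule_span_eq] at hfbar
  -- the ideal K = (J : 2)
  set K : Ideal (Polynomial Z4) :=
    Submodule.comap (LinearMap.lsmul (Polynomial Z4) (Polynomial Z4) 2) J with hK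
  have hKmem : ∀ p : Polynomial Z4, p ∈ K ↔ 2*p ∈ J := by
    intro p
    rw [hK, Submodule.mem_comap, LinearMap.lsmul_apply, smul_eq_mul]
  obtain ⟨gbar, hgbar⟩ := (IsPrincipalIdealRing.principal (K.map rho)).principal
  rw [Ideal.submodule_span_eq] at hgbar
  have hJK : J ≤ K := fun p hp => (hKmem p).mpr (J.mul_mem_left 2 hp)
  -- divisibilities of the reductions
  have hfM : fbar ∣ M := by
    rw [← Ideal.mem_span_singleton, ← hfbar]
    exact hrhoM ▸ Ideal.mem_map_of_mem rho hJ
  have hgM : gbar ∣ M := by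
    rw [← Ideal.mem_span_singleton, ← hgbar]
    refine hrhoM ▸ Ideal.mem_map_of_mem rho ?_
    exact (hKmem _).mpr (J.mul_mem_left 2 hJ)
  have hgf : gbar ∣ fbar := by
    rw [← Ideal.mem_span_singleton, ← hgbar]
    refine Ideal.map_mono hJK ?_
    rw [hfbar]
    exact Ideal.mem_span_singleton_self fbar
  -- lift the factorization M = fbar * hbar
  obtain ⟨hbar, hhbar⟩ := hfM
  have sffh : Squarefree (fbar * hbar) := hhbar ▸ sf
  have cofh : IsCoprime fbar hbar := (squarefree_mul_iff.mp sffh).1.isCoprime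
  obtain ⟨f, h, hrf, hrh, hfh⟩ := hensel cofh (by rw [hrhoM, hhbar])
  -- lift the factorization fbar = gbar * kbar
  obtain ⟨kbar, hkbar⟩ := hgf
  have sfgk : Squarefree (gbar * kbar) := Squarefree.squarefree_of_dvd ⟨hbar, by rw [hhbar, hkbar]⟩ sf
  have cogk : IsCoprime gbar kbar := (squarefree_mul_iff.mp sfgk).1.isCoprime
  obtain ⟨g, k, hrg, hrk, hgk⟩ := hensel cogk (by rw [hrf, hkbar])
  -- 2*g ∈ J
  have h2g : 2*g ∈ J := by
    have : gbar ∈ K.map rho := by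
      rw [hgbar]; exact Ideal.mem_span_singleton_self gbar
    obtain ⟨p, hpK, hpg⟩ := (Ideal.mem_map_iff_of_surjective rho rho_surj).mp this
    obtain ⟨e, he⟩ : ∃ e, p - g = 2*e := ker_rho (by rw [map_sub, hpg, hrg, sub_self])
    have h2p : 2*p ∈ J := (hKmem p).mp hpK
    have : 2*g = 2*p := by linear_combination (-2:Polynomial Z4)*he - e*tm
    rwa [this]
  -- membership in K detects divisibility by gbar
  have hKdvd : ∀ q : Polynomial Z4, 2*q ∈ J → gbar ∣ rho q := by
    intro q hq
    rw [← Ideal.mem_span_singleton, ← hgbar]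
    exact Ideal.mem_map_of_mem rho ((hKmem q).mpr hq)
  have hdvd2 : ∀ q : Polynomial Z4, gbar ∣ rho q → ∃ d, 2*q = d*(2*g) := by
    intro q hdq
    obtain ⟨dbar, hdbar⟩ := hdq
    obtain ⟨d, hd⟩ := rho_surj dbar
    obtain ⟨e, he⟩ : ∃ e, q - g*d = 2*e :=
      ker_rho (by rw [map_sub, map_mul, hrg, hd, ← hdbar, sub_self])
    exact ⟨d, by linear_combination 2*he + e*tm⟩
  -- f ∈ J
  have hfJ : f ∈ J := by
    have : fbar ∈ J.map rho := by
      rw [hfbar]; exact Ideal.mem_span_singleton_self fbar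
    obtain ⟨p0, hp0J, hp0⟩ := (Ideal.mem_map_iff_of_surjective rho rho_surj).mp this
    obtain ⟨q, hq⟩ : ∃ q, p0 - f = 2*q := ker_rho (by rw [map_sub, hp0, hrf, sub_self])
    have hhq : 2*(h*q) ∈ J := by
      have mem : h*p0 - ((X:Polynomial Z4)^n - 1) ∈ J := J.sub_mem (J.mul_mem_left h hp0J) hJ
      have : h*p0 - ((X:Polynomial Z4)^n - 1) = 2*(h*q) := by
        rw [hfh]; linear_combination h*hq
      rwa [this] at mem
    have hgq : gbar ∣ rho q := by
      have hco : IsCoprime gbar hbar := by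
        have : Squarefree (gbar * hbar) := by
          refine Squarefree.squarefree_of_dvd ⟨kbar, ?_⟩ sf
          rw [hhbar, hkbar]; ring
        exact (squarefree_mul_iff.mp this).1.isCoprime
      have : gbar ∣ hbar * rho q := by
        have := hKdvd (h*q) hhq
        rwa [map_mul, hrh] at this
      exact hco.dvd_of_dvd_mul_left this
    obtain ⟨d, hd⟩ := hdvd2 q hgq
    have : f = p0 - d*(2*g) := by rw [← hd]; linear_combination -hq
    rw [this]
    exact J.sub_mem hp0J (J.mul_mem_left d h2g)
  -- representation of elements of J
  have hrep : ∀ j ∈ J, ∃ c d, j = c*f + d*(2*g) := by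
    intro j hj
    have : fbar ∣ rho j := by
      rw [← Ideal.mem_span_singleton, ← hfbar]
      exact Ideal.mem_map_of_mem rho hj
    obtain ⟨cbar, hcbar⟩ := this
    obtain ⟨c, hc⟩ := rho_surj cbar
    obtain ⟨q, hq⟩ : ∃ q, j - c*f = 2*q :=
      ker_rho (by rw [map_sub, map_mul, hc, hrf, hcbar, mul_comm, sub_self])
    have h2q : 2*q ∈ J := by
      have : j - c*f ∈ J := J.sub_mem hj (J.mul_mem_left c hfJ)
      rwa [hq] at this
    obtain ⟨d, hd⟩ := hdvd2 q (hKdvd q h2q)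
    exact ⟨c, d, by rw [← hd]; linear_combination hq⟩
  -- the target ideal D
  set D : Ideal (Polynomial Z4) :=
    Ideal.span {f + 2*g} ⊔ Ideal.span {(X:Polynomial Z4)^n - 1} with hD
  have hfgD : f + 2*g ∈ D :=
    Submodule.mem_sup_left (Ideal.mem_span_singleton_self _)
  have hMD : (X:Polynomial Z4)^n - 1 ∈ D :=
    Submodule.mem_sup_right (Ideal.mem_span_singleton_self _)
  have m1 : 2*(g*h) ∈ D := by
    have : 2*(g*h) = h*(f + 2*g) - ((X:Polynomial Z4)^n - 1) := by
      rw [hfh]; ring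
    rw [this]
    exact D.sub_mem (D.mul_mem_left h hfgD) hMD
  have m2 : 2*(g*k) ∈ D := by
    have : 2*(g*k) = 2*(f + 2*g) := by
      rw [← hgk]; linear_combination -g*tm
    rw [this]
    exact D.mul_mem_left 2 hfgD
  -- 2*g ∈ D
  have h2gD : 2*g ∈ D := by
    have cokh : IsCoprime kbar hbar := by
      have : Squarefree (kbar * hbar) :=
        Squarefree.squarefree_of_dvd ⟨gbar, by rw [hhbar, hkbar]; ring⟩ sf
      exact (squarefree_mul_iff.mp this).1.isCoprime
    obtain ⟨abar, bbar, hab⟩ := cokh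
    obtain ⟨a, ha⟩ := rho_surj abar
    obtain ⟨b, hb⟩ := rho_surj bbar
    obtain ⟨u, hu⟩ : ∃ u, a*k + b*h - 1 = 2*u :=
      ker_rho (by rw [map_sub, map_add, map_mul, map_mul, ha, hb, hrk, hrh, map_one, hab, sub_self])
    have : 2*g = a*(2*(g*k)) + b*(2*(g*h)) := by
      linear_combination -2*g*hu - g*u*tm
    rw [this]
    exact D.add_mem (D.mul_mem_left a m2) (D.mul_mem_left b m1)
  have hfD : f ∈ D := by
    have : f = (f + 2*g) - 2*g := by ring
    rw [this]
    exact D.sub_mem hfgD h2gD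
  refine ⟨f, g, ⟨k, hgk⟩, ⟨h, hfh⟩, le_antisymm ?_ ?_⟩
  · intro j hj
    obtain ⟨c, d, hcd⟩ := hrep j hj
    rw [hcd]
    exact D.add_mem (D.mul_mem_left c hfD) (D.mul_mem_left d h2gD)
  · refine sup_le ?_ ?_
    · rw [Ideal.span_le, Set.singleton_subset_iff]
      exact J.add_mem hfJ h2g
    · rw [Ideal.span_le, Set.singleton_subset_iff]
      exact hJ

noncomputable def mkL (n : ℕ) : Polynomial Z4 →ₗ[Polynomial Z4] Rq n where
  toFun := mkQ n
  map_add' := fun a b => map_add _ a b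
  map_smul' := fun p q => by
    simp only [RingHom.id_apply, mkQ]
    rw [← Ideal.Quotient.mk_eq_mk, ← Ideal.Quotient.mk_eq_mk, ← Submodule.Quotient.mk_smul,
      smul_eq_mul]

lemma mkL_surj (n : ℕ) : Function.Surjective (mkL n) := Ideal.Quotient.mk_surjective

lemma submodule_structure {n : ℕ} (hn : Odd n) (N : Submodule (Polynomial Z4) (Rq n)) :
    ∃ f g : Polynomial Z4, g ∣ f ∧ f ∣ ((X:Polynomial Z4)^n - 1) ∧
      N = Submodule.span (Polynomial Z4) {mkQ n (f + 2*g)} := by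
  set J : Ideal (Polynomial Z4) := N.comap (mkL n) with hJdef
  have hJ : (X:Polynomial Z4)^n - 1 ∈ J := by
    have : mkL n ((X:Polynomial Z4)^n - 1) = 0 := by
      show mkQ n _ = 0
      rw [mkQ, Ideal.Quotient.eq_zero_iff_mem]
      exact Ideal.subset_span rfl
    show mkL n _ ∈ N
    rw [this]; exact N.zero_mem
  obtain ⟨f, g, hgf, hfd, hEq⟩ := ideal_structure hn J hJ
  refine ⟨f, g, hgf, hfd, ?_⟩
  have hNJ : N = Submodule.map (mkL n) J := (Submodule.map_comap_eq_of_surjective (mkL_surj n) N).symm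
  have h0 : mkL n ((X:Polynomial Z4)^n - 1) = 0 := by
    show mkQ n _ = 0
    rw [mkQ, Ideal.Quotient.eq_zero_iff_mem]
    exact Ideal.subset_span rfl
  rw [hNJ, hEq, Submodule.map_sup]
  have e1 : Submodule.map (mkL n) (Ideal.span {f + 2*g}) =
      Submodule.span (Polynomial Z4) {mkQ n (f + 2*g)} := by
    show Submodule.map (mkL n) (Submodule.span _ _) = _
    rw [Submodule.map_span, Set.image_singleton]; rfl
  have e2 : Submodule.map (mkL n) (Ideal.span {(X:Polynomial Z4)^n - 1}) = ⊥ := by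
    show Submodule.map (mkL n) (Submodule.span _ _) = _
    rw [Submodule.map_span, Set.image_singleton, h0, Submodule.span_zero_singleton]
  rw [e1, e2, sup_bot_eq]


/-- every double cyclic code of length `(r,s)` over `Z4` (with `r`, `s` odd),
viewed as a `Z4[x]`-submodule of `Z4[x]/(x^r−1) × Z4[x]/(x^s−1)`, is generated by two
elements `(f1+2g1 | 0)` and `(l | f2+2g2)` with `g1 ∣ f1 ∣ x^r−1` and `g2 ∣ f2 ∣ x^s−1`. -/
theorem stmt_3 (r s : ℕ) (hr : Odd r) (hs : Odd s)
    (C : Submodule (Polynomial Z4) (Rq r × Rq s)) :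
    ∃ f1 g1 l f2 g2 : Polynomial Z4,
      g1 ∣ f1 ∧ f1 ∣ (X ^ r - 1) ∧ g2 ∣ f2 ∧ f2 ∣ (X ^ s - 1) ∧
      C = Submodule.span (Polynomial Z4)
        {(mkQ r (f1 + 2 * g1), (0 : Rq s)), (mkQ r l, mkQ s (f2 + 2 * g2))} := by
  -- second projection
  obtain ⟨f2, g2, hg2, hf2, hN2⟩ := submodule_structure hs (C.map (LinearMap.snd (Polynomial Z4) (Rq r) (Rq s)))
  -- kernel part
  obtain ⟨f1, g1, hg1, hf1, hK1⟩ := submodule_structure hr (C.comap (LinearMap.inl (Polynomial Z4) (Rq r) (Rq s)))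
  set β := mkQ s (f2 + 2*g2) with hβ
  set α := mkQ r (f1 + 2*g1) with hα
  have hβmem : β ∈ C.map (LinearMap.snd (Polynomial Z4) (Rq r) (Rq s)) := by
    rw [hN2]; exact Submodule.mem_span_singleton_self β
  obtain ⟨x, hxC, hx2⟩ := hβmem
  obtain ⟨l, hl⟩ := Ideal.Quotient.mk_surjective (I := Ideal.span ({(X : Polynomial Z4) ^ r - 1} : Set (Polynomial Z4))) x.1
  have hlC : (mkQ r l, β) ∈ C := by
    have : (mkQ r l, β) = x := by
      ext
      · exact hl
      · exact hx2.symm ▸ rfl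
    rwa [this]
  refine ⟨f1, g1, l, f2, g2, hg1, hf1, hg2, hf2, le_antisymm ?_ ?_⟩
  · intro c hc
    have hc2 : c.2 ∈ C.map (LinearMap.snd (Polynomial Z4) (Rq r) (Rq s)) := ⟨c, hc, rfl⟩
    rw [hN2] at hc2
    obtain ⟨p, hp⟩ := Submodule.mem_span_singleton.mp hc2
    have hker : c - p • (mkQ r l, β) ∈ C := C.sub_mem hc (C.smul_mem p hlC)
    have hsnd : (c - p • (mkQ r l, β)).2 = 0 := by
      simp [hp]
    have hmem : (c - p • (mkQ r l, β)).1 ∈ C.comap (LinearMap.inl (Polynomial Z4) (Rq r) (Rq s)) := by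
      show ((c - p • (mkQ r l, β)).1, (0 : Rq s)) ∈ C
      rw [← hsnd]
      exact hker
    rw [hK1] at hmem
    obtain ⟨q, hq⟩ := Submodule.mem_span_singleton.mp hmem
    have : c = q • (α, (0:Rq s)) + p • (mkQ r l, β) := by
      ext
      · show c.1 = q • α + p • mkQ r l
        have : c.1 - p • mkQ r l = q • α := hq.symm
        linear_combination (norm := module) this
      · show c.2 = q • (0:Rq s) + p • β
        rw [smul_zero, zero_add, hp]
    rw [this]
    refine Submodule.add_mem _ ?_ ?_
    · exact Submodule.smul_mem _ q (Submodule.subset_span (by left; rfl))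
    · exact Submodule.smul_mem _ p (Submodule.subset_span (by right; rfl))
  · rw [Submodule.span_le]
    rintro y (rfl | rfl)
    · have : α ∈ C.comap (LinearMap.inl (Polynomial Z4) (Rq r) (Rq s)) := by
        rw [hK1]; exact Submodule.mem_span_singleton_self α
      exact this
    · exact hlC
end

section
/- If (F1(x)|0) and (l(x)|F2(x)) are elements of Z4[x]/(x^r−1) × Z4[x]/(x^s−1) satisfying φ((F1(x)|0),(l(x)|F2(x))) = 0 in Z4[x]/(x^k−1), where k = lcm(r,s), then F1(x)·l*(x) = 0 in Z4[x]/(x^r−1). -/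
open Polynomial

/-- `θ_m` evaluated at `x^d`, i.e. `∑_{i=0}^{m-1} x^{d·i}`. -/
noncomputable def theta (m d : ℕ) : Polynomial Z4 := ∑ i ∈ Finset.range m, X ^ (d * i)

/-- The polynomial representing `φ((a|b),(c|d))` (before reduction mod `x^k−1`),
where `k = lcm(r,s)` and `p.reverse = x^{deg p}·p(1/x)` is the reciprocal polynomial. -/
noncomputable def phiPoly (r s : ℕ) (a b c d : Polynomial Z4) : Polynomial Z4 :=
  a * theta (Nat.lcm r s / r) r * X ^ (Nat.lcm r s - 1 - c.natDegree) * c.reverse +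
    b * theta (Nat.lcm r s / s) s * X ^ (Nat.lcm r s - 1 - d.natDegree) * d.reverse

/-- if `φ((F1|0),(l|F2)) = 0` in `Z4[x]/(x^k−1)` with `k = lcm(r,s)`,
then `F1·l* = 0` in `Z4[x]/(x^r−1)`. -/
theorem stmt_10 (r s : ℕ) (hr : 0 < r) (hs : 0 < s)
    (F1 l F2 : Polynomial Z4)
    (hphi : mkQ (Nat.lcm r s) (phiPoly r s F1 0 l F2) = 0) :
    mkQ r (F1 * l.reverse) = 0 := by
  set k := Nat.lcm r s with hk
  have hrk : r ∣ k := Nat.dvd_lcm_left r s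
  have hk0 : 0 < k := Nat.lcm_pos hr hs
  set e := k - 1 - l.natDegree with he
  set θ := theta (k / r) r with hθ
  have hθmul : θ * (X ^ r - 1) = (X : Polynomial Z4) ^ k - 1 := by
    have h1 := geom_sum_mul (X ^ r : Polynomial Z4) (k / r)
    have h2 : ((X : Polynomial Z4) ^ r) ^ (k / r) = X ^ k := by
      rw [← pow_mul, Nat.mul_div_cancel' hrk]
    rw [hθ]
    unfold theta
    simpa [pow_mul, h2] using h1
  -- the hypothesis gives divisibility by X^k - 1
  have hdvd : ((X : Polynomial Z4) ^ k - 1) ∣ F1 * θ * X ^ e * l.reverse := by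
    have h0 : phiPoly r s F1 0 l F2 = F1 * θ * X ^ e * l.reverse := by
      unfold phiPoly
      simp [hθ, he, hk]
    rw [mkQ, Ideal.Quotient.eq_zero_iff_mem, Ideal.mem_span_singleton, h0] at hphi
    exact hphi
  -- X^k - 1 is monic, hence regular; θ is a factor, hence regular
  have hmon : ((X : Polynomial Z4) ^ k - 1).Monic := by
    simpa using Polynomial.monic_X_pow_sub_C (1 : Z4) hk0.ne'
  have hreg : IsRegular ((X : Polynomial Z4) ^ k - 1) := hmon.isRegular
  have hθreg : ∀ a : Polynomial Z4, θ * a = 0 → a = 0 := by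
    intro a ha
    have h : ((X : Polynomial Z4) ^ k - 1) * a = ((X : Polynomial Z4) ^ k - 1) * 0 := by
      rw [mul_zero, ← hθmul, mul_comm θ (X ^ r - 1), mul_assoc, ha, mul_zero]
    exact hreg.left h
  -- cancel θ to get divisibility by X^r - 1
  obtain ⟨q, hq⟩ := hdvd
  have hcancel : F1 * X ^ e * l.reverse = (X ^ r - 1) * q := by
    apply sub_eq_zero.mp
    apply hθreg
    rw [mul_sub]
    apply sub_eq_zero.mpr
    rw [← hθmul] at hq
    ring_nf
    ring_nf at hq
    linear_combination hq
  -- pass to the quotient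
  have hX : (mkQ r X) ^ r = 1 := by
    have h : mkQ r ((X : Polynomial Z4) ^ r - 1) = 0 :=
      Ideal.Quotient.eq_zero_iff_mem.mpr (Ideal.mem_span_singleton_self _)
    rw [mkQ, map_sub, map_pow, map_one, sub_eq_zero] at h
    simpa [mkQ] using h
  have h2 : mkQ r (F1 * X ^ e * l.reverse) = 0 := by
    rw [mkQ, Ideal.Quotient.eq_zero_iff_mem, Ideal.mem_span_singleton, hcancel]
    exact Dvd.intro q rfl
  have h3 : mkQ r (F1 * l.reverse) * (mkQ r X) ^ e = 0 := by
    have heq : F1 * X ^ e * l.reverse = F1 * l.reverse * X ^ e := by ring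
    rw [heq] at h2
    rw [mkQ, map_mul, map_pow] at h2
    exact h2
  have hadd : e + e * (r - 1) = r * e := by
    have h1 : r = (r - 1) + 1 := (Nat.succ_pred_eq_of_pos hr).symm
    conv_rhs => rw [h1, add_mul, one_mul, mul_comm (r - 1) e]
    omega
  have hinv : (mkQ r X) ^ e * (mkQ r X) ^ (e * (r - 1)) = 1 := by
    rw [← pow_add, hadd, pow_mul, hX, one_pow]
  calc mkQ r (F1 * l.reverse)
      = mkQ r (F1 * l.reverse) * ((mkQ r X) ^ e * (mkQ r X) ^ (e * (r - 1))) := by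
        rw [hinv, mul_one]
    _ = mkQ r (F1 * l.reverse) * (mkQ r X) ^ e * (mkQ r X) ^ (e * (r - 1)) := by ring
    _ = 0 := by rw [h3, zero_mul]
end

section
/- If (0|D1(x)) and (m(x)|D2(x)) are elements of Z4[x]/(x^r−1) × Z4[x]/(x^s−1) satisfying φ((0|D1(x)),(m(x)|D2(x))) = 0 in Z4[x]/(x^k−1), where k = lcm(r,s), then D1(x)·D2*(x) = 0 in Z4[x]/(x^s−1). -/
open Polynomial

/-- if `φ((0|D1),(m|D2)) = 0` in `Z4[x]/(x^k−1)` with `k = lcm(r,s)`,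
then `D1·D2* = 0` in `Z4[x]/(x^s−1)`. -/
theorem stmt_11 (r s : ℕ) (hr : 0 < r) (hs : 0 < s)
    (D1 m D2 : Polynomial Z4)
    (hphi : mkQ (Nat.lcm r s) (phiPoly r s 0 D1 m D2) = 0) :
    mkQ s (D1 * D2.reverse) = 0 := by
  classical
  set k := Nat.lcm r s with hk
  have hsk : s ∣ k := Nat.dvd_lcm_right r s
  have hk0 : 0 < k := Nat.pos_of_ne_zero (Nat.lcm_ne_zero hr.ne' hs.ne')
  set q := k / s with hq
  have hsq : s * q = k := Nat.mul_div_cancel' hsk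
  set e := k - 1 - D2.natDegree with he
  -- factorization X^k - 1 = θ * (X^s - 1)
  have hfact : theta q s * ((X : Polynomial Z4) ^ s - 1) = X ^ k - 1 := by
    have h := geom_sum_mul ((X : Polynomial Z4) ^ s) q
    calc theta q s * ((X : Polynomial Z4) ^ s - 1)
        = (∑ i ∈ Finset.range q, ((X : Polynomial Z4) ^ s) ^ i) * (X ^ s - 1) := by
          simp [theta, ← pow_mul]
      _ = ((X : Polynomial Z4) ^ s) ^ q - 1 := h
      _ = X ^ k - 1 := by rw [← pow_mul, hsq]
  -- θ is monic
  have hmS : ((X : Polynomial Z4) ^ s - 1).Monic := by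
    simpa using monic_X_pow_sub_C (1 : Z4) hs.ne'
  have hmK : ((X : Polynomial Z4) ^ k - 1).Monic := by
    simpa using monic_X_pow_sub_C (1 : Z4) hk0.ne'
  have hmT : (theta q s).Monic := by
    apply Monic.of_mul_monic_left hmS
    rw [mul_comm, hfact]; exact hmK
  -- from hphi : divisibility
  have hdvd : ((X : Polynomial Z4) ^ k - 1) ∣ phiPoly r s 0 D1 m D2 := by
    rw [mkQ, Ideal.Quotient.eq_zero_iff_mem, Ideal.mem_span_singleton] at hphi
    exact hphi
  have hphival : phiPoly r s 0 D1 m D2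
      = theta q s * (D1 * X ^ e * D2.reverse) := by
    simp only [phiPoly, zero_mul, zero_add, ← hk, ← hq, ← he]; ring
  have hdvd2 : ((X : Polynomial Z4) ^ s - 1) ∣ D1 * X ^ e * D2.reverse := by
    rw [← dvd_cancel_left_mem_nonZeroDivisors hmT.mem_nonZeroDivisors]
    rw [hfact, ← hphival]; exact hdvd
  -- remove the power of X
  have hX : ((X : Polynomial Z4) ^ s - 1) ∣ (X : Polynomial Z4) ^ (s * e) - 1 := by
    have := sub_dvd_pow_sub_pow ((X : Polynomial Z4) ^ s) 1 e
    simpa [← pow_mul] using this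
  have hdvd3 : ((X : Polynomial Z4) ^ s - 1) ∣ D1 * D2.reverse := by
    have h1 : ((X : Polynomial Z4) ^ s - 1) ∣ D1 * D2.reverse * X ^ (s * e) := by
      have hee : s * e = e + (s - 1) * e := by
        have h1 : (s - 1) * e = s * e - e := Nat.sub_one_mul s e
        have h2 : e ≤ s * e := Nat.le_mul_of_pos_left e hs
        omega
      have hpow : (X : Polynomial Z4) ^ (s * e) = X ^ e * X ^ ((s - 1) * e) := by
        rw [← pow_add, hee]
      have hre : D1 * D2.reverse * X ^ (s * e)
          = (D1 * X ^ e * D2.reverse) * X ^ ((s - 1) * e) := by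
        rw [hpow]; ring
      rw [hre]; exact hdvd2.mul_right _
    have h2 : D1 * D2.reverse
        = D1 * D2.reverse * X ^ (s * e) - D1 * D2.reverse * ((X : Polynomial Z4) ^ (s * e) - 1) := by
      ring
    rw [h2]; exact dvd_sub h1 (hX.mul_left _)
  rw [mkQ, Ideal.Quotient.eq_zero_iff_mem, Ideal.mem_span_singleton]
  exact hdvd3
end

section
/- Let C = ((F1(x)|0),(l(x)|F2(x))) be a double cyclic code of length (r,s) over Z4 and let its dual double cyclic code be C⊥ = ((F̂1(x)|0),(l̂(x)|F̂2(x))). Then F̂1*(x)·gcd(F1(x),l(x)) is a multiple of x^r−1 in Z4[x], i.e., F̂1*(x)·gcd(F1(x),l(x)) = λ(x)(x^r−1) for some λ ∈ Z4[x]. -/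
open Polynomial

/-- The `Z4[x]`-submodule of `Z4[x]/(x^r−1) × Z4[x]/(x^s−1)` generated by
`(F1|0)` and `(l|F2)`. -/
noncomputable def polyGen2 (r s : ℕ) (F1 l F2 : Polynomial Z4) :
    Submodule (Polynomial Z4) (Rq r × Rq s) :=
  Submodule.span (Polynomial Z4) {(mkQ r F1, (0 : Rq s)), (mkQ r l, mkQ s F2)}

/-- The dual of a set of words with respect to the standard inner product. -/
def dualSet {r s : ℕ} (C : Set ((Fin r → Z4) × (Fin s → Z4))) :
    Set ((Fin r → Z4) × (Fin s → Z4)) :=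
  {c' | ∀ c ∈ C, innerProd c c' = 0}

/-!
Identify a word of length `r` with the residue of its polynomial modulo `x^r - 1`. For
`N ≥ deg b`, the `t`-th coefficient of the residue of `a * x^N b(1/x)` is the inner product of
the words of `x^(N + r - t) a` and `b`: both sides are biadditive, so it suffices to compare
them on monomials. Hence if every cyclic shift of `a` is orthogonal to `b`, then `x^r - 1`
divides `a * b*`. The word `(F̂1|0)` of `C⊥` is orthogonal to all shifts of `(F1|0)` and
`(l|F2)`, so `x^r - 1` divides `F1 * F̂1*` and `l * F̂1*`, hence also the Bézout combination
`F̂1* * gcd(F1, l)`.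
-/
namespace Polynomial

variable {R : Type*} [CommRing R] {r : ℕ}

lemma monic_X_pow_sub_one (hr : 0 < r) : (X ^ r - 1 : R[X]).Monic := by
  simpa using monic_X_pow_sub_C (1 : R) hr.ne'

variable [Nontrivial R]

lemma degree_X_pow_sub_one (hr : 0 < r) : (X ^ r - 1 : R[X]).degree = r := by
  simpa using degree_X_pow_sub_C hr (1 : R)

lemma X_pow_modByMonic_X_pow_sub_one (hr : 0 < r) (w : ℕ) :
    (X ^ w : R[X]) %ₘ (X ^ r - 1) = X ^ (w % r) := by
  have hdvd : (X ^ r - 1 : R[X]) ∣ X ^ w - X ^ (w % r) := by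
    have h := (pow_one_sub_dvd_pow_mul_sub_one (X : R[X]) r (w / r)).mul_left (X ^ (w % r))
    rwa [mul_sub, mul_one, ← pow_add, Nat.mod_add_div] at h
  rw [modByMonic_eq_of_dvd_sub (monic_X_pow_sub_one hr) hdvd,
    (modByMonic_eq_self_iff (monic_X_pow_sub_one hr)).2]
  rw [degree_X_pow, degree_X_pow_sub_one hr]
  exact_mod_cast Nat.mod_lt w hr

end Polynomial

section CyclicCoeffs

open Finset

variable {R : Type*} [CommRing R]

noncomputable def cyclicCoeffs (r : ℕ) (p : R[X]) : Fin r → R :=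
  fun k => (p %ₘ (X ^ r - 1)).coeff k

lemma cyclicCoeffs_add (r : ℕ) (p q : R[X]) :
    cyclicCoeffs r (p + q) = cyclicCoeffs r p + cyclicCoeffs r q := by
  ext k
  simp only [cyclicCoeffs, add_modByMonic, coeff_add, Pi.add_apply]

variable [Nontrivial R]

lemma cyclicCoeffs_C_mul_X_pow {r : ℕ} (hr : 0 < r) (c : R) (w : ℕ) (k : Fin r) :
    cyclicCoeffs r (C c * X ^ w) k = if (k : ℕ) = w % r then c else 0 := by
  rw [cyclicCoeffs, ← smul_eq_C_mul, smul_modByMonic, X_pow_modByMonic_X_pow_sub_one hr,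
    coeff_smul, coeff_X_pow, smul_eq_mul, mul_ite, mul_one, mul_zero]

lemma sum_cyclicCoeffs_mul_cyclicCoeffs_C_mul_X_pow {r : ℕ} (hr : 0 < r)
    (α β : R) (u w : ℕ) :
    ∑ k : Fin r, cyclicCoeffs r (C α * X ^ u) k * cyclicCoeffs r (C β * X ^ w) k
      = if u % r = w % r then α * β else 0 := by
  simp only [cyclicCoeffs_C_mul_X_pow hr]
  rw [Fin.sum_univ_eq_sum_range
    (fun k => (if k = u % r then α else 0) * (if k = w % r then β else 0)) r]
  simp [ite_mul, Nat.mod_lt _ hr, eq_comm]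

lemma Nat.add_sub_mod_eq_iff {r u w N t : ℕ} (hw : w ≤ N) (ht : t < r) :
    (u + (N - w)) % r = t ↔ (N + (r - t) + u) % r = w % r := by
  nth_rw 1 [← Nat.mod_eq_of_lt ht]
  rw [← ZMod.natCast_eq_natCast_iff', ← ZMod.natCast_eq_natCast_iff']
  push_cast [Nat.cast_sub hw, Nat.cast_sub ht.le, ZMod.natCast_self]
  constructor <;> intro h <;> linear_combination h

lemma cyclicCoeffs_C_mul_X_pow_mul_reflect {r : ℕ} (hr : 0 < r) (α β : R)
    {u w N : ℕ} (hw : w ≤ N) (t : Fin r) :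
    cyclicCoeffs r (C α * X ^ u * reflect N (C β * X ^ w)) t
      = ∑ k : Fin r, cyclicCoeffs r (X ^ (N + (r - t)) * (C α * X ^ u)) k
          * cyclicCoeffs r (C β * X ^ w) k := by
  have hprod : C α * X ^ u * reflect N (C β * X ^ w) = C (α * β) * X ^ (u + (N - w)) := by
    rw [reflect_C_mul_X_pow, revAt_le hw, C_mul]
    ring
  have hshift : X ^ (N + (r - t)) * (C α * X ^ u) = C α * X ^ (N + (r - t) + u) := by ring
  rw [hprod, hshift, cyclicCoeffs_C_mul_X_pow hr, sum_cyclicCoeffs_mul_cyclicCoeffs_C_mul_X_pow hr]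
  exact if_congr (eq_comm.trans (Nat.add_sub_mod_eq_iff hw t.isLt)) rfl rfl

lemma cyclicCoeffs_mul_reflect {r : ℕ} (hr : 0 < r) (a b : R[X]) {N : ℕ}
    (hN : b.natDegree ≤ N) (t : Fin r) :
    cyclicCoeffs r (a * reflect N b) t
      = ∑ k : Fin r, cyclicCoeffs r (X ^ (N + (r - t)) * a) k * cyclicCoeffs r b k := by
  induction a using Polynomial.induction_on' with
  | add p q hp hq =>
    simp only [add_mul, mul_add, cyclicCoeffs_add, Pi.add_apply, sum_add_distrib, hp, hq]
  | monomial u α =>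
    rw [← C_mul_X_pow_eq_monomial]
    refine induction_with_natDegree_le (fun b => cyclicCoeffs r (C α * X ^ u * reflect N b) t
      = ∑ k : Fin r, cyclicCoeffs r (X ^ (N + (r - t)) * (C α * X ^ u)) k * cyclicCoeffs r b k)
      N ?_ ?_ ?_ b hN
    · simp [cyclicCoeffs]
    · exact fun w β _ hw => cyclicCoeffs_C_mul_X_pow_mul_reflect hr α β hw t
    · intro p q _ _ hp hq
      simp only [reflect_add, mul_add, cyclicCoeffs_add, Pi.add_apply, sum_add_distrib, hp, hq]

lemma X_pow_sub_one_dvd_mul_reverse {r : ℕ} (hr : 0 < r) {a b : R[X]}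
    (h : ∀ i : ℕ, ∑ k : Fin r, cyclicCoeffs r (X ^ i * a) k * cyclicCoeffs r b k = 0) :
    X ^ r - 1 ∣ a * b.reverse := by
  rw [← modByMonic_eq_zero_iff_dvd (monic_X_pow_sub_one hr)]
  ext n
  rw [coeff_zero]
  by_cases hn : n < r
  · exact (cyclicCoeffs_mul_reflect hr a b le_rfl ⟨n, hn⟩).trans (h _)
  · refine coeff_eq_zero_of_degree_lt
      ((degree_modByMonic_lt _ (monic_X_pow_sub_one hr)).trans_le ?_)
    rw [degree_X_pow_sub_one hr]
    exact_mod_cast not_lt.mp hn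

end CyclicCoeffs

instance : Nontrivial Z4 := ⟨⟨0, 1, by decide⟩⟩

lemma mkQ_zero (n : ℕ) : mkQ n 0 = 0 := map_zero _

lemma toPoly_zero (n : ℕ) : toPoly (0 : Fin n → Z4) = 0 := by
  simp [toPoly]

lemma mkQ_modByMonic (n : ℕ) (p : Z4[X]) : mkQ n (p %ₘ (X ^ n - 1)) = mkQ n p :=
  Ideal.Quotient.eq.2 <| Ideal.mem_span_singleton.2
    ⟨-(p /ₘ (X ^ n - 1)), by rw [modByMonic_eq_sub_mul_div]; ring⟩

lemma toPoly_cyclicCoeffs {r : ℕ} (hr : 0 < r) (p : Z4[X]) :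
    toPoly (cyclicCoeffs r p) = p %ₘ (X ^ r - 1) := by
  have hdeg : (p %ₘ (X ^ r - 1)).degree < r :=
    (degree_X_pow_sub_one (R := Z4) hr) ▸ degree_modByMonic_lt p (monic_X_pow_sub_one hr)
  simp only [toPoly, cyclicCoeffs]
  rw [sum_fin (fun n a => C a * X ^ n) (by simp) hdeg]
  exact sum_C_mul_X_pow_eq _

lemma tau_cyclicCoeffs {r s : ℕ} (hr : 0 < r) (hs : 0 < s) (p q : Z4[X]) :
    tau (cyclicCoeffs r p, cyclicCoeffs s q) = (mkQ r p, mkQ s q) := by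
  simp only [tau, toPoly_cyclicCoeffs hr, toPoly_cyclicCoeffs hs, mkQ_modByMonic]

lemma tau_cyclicCoeffs_zero {r s : ℕ} (hr : 0 < r) (p : Z4[X]) :
    tau ((cyclicCoeffs r p, 0) : (Fin r → Z4) × (Fin s → Z4)) = (mkQ r p, 0) := by
  simp only [tau, toPoly_cyclicCoeffs hr, mkQ_modByMonic, toPoly_zero, mkQ_zero]

lemma sum_cyclicCoeffs_mul_eq_zero_of_mem_dualSet {r s : ℕ} (hr : 0 < r) (hs : 0 < s)
    {F1 l F2 g g₂ b : Z4[X]} {C : Set ((Fin r → Z4) × (Fin s → Z4))}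
    (hC : ∀ c, tau c ∈ polyGen2 r s F1 l F2 → c ∈ C)
    (hg : (mkQ r g, mkQ s g₂) ∈ polyGen2 r s F1 l F2) (hb : (cyclicCoeffs r b, 0) ∈ dualSet C)
    (i : ℕ) : ∑ k : Fin r, cyclicCoeffs r (X ^ i * g) k * cyclicCoeffs r b k = 0 := by
  have hshift : (cyclicCoeffs r (X ^ i * g), cyclicCoeffs s (X ^ i * g₂)) ∈ C := by
    refine hC _ ?_
    rw [tau_cyclicCoeffs hr hs]
    exact (polyGen2 r s F1 l F2).smul_mem (X ^ i) hg
  simpa [innerProd] using hb _ hshift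

theorem stmt_12_general (r s : ℕ) (hr : Odd r) (hs : Odd s)
    (F1 l F2 Fh1 lh Fh2 d : Polynomial Z4)
    (C : Set ((Fin r → Z4) × (Fin s → Z4)))
    (hC : ∀ c, c ∈ C ↔ tau c ∈ polyGen2 r s F1 l F2)
    (hdual : ∀ c, c ∈ dualSet C ↔ tau c ∈ polyGen2 r s Fh1 lh Fh2)
    (hbezout : ∃ a b : Polynomial Z4, d = a * F1 + b * l) :
    ∃ lam : Polynomial Z4, Fh1.reverse * d = lam * (X ^ r - 1) := by
  obtain ⟨a, b, rfl⟩ := hbezout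
  have hFh1 : (cyclicCoeffs r Fh1, 0) ∈ dualSet C := by
    refine (hdual _).2 ?_
    rw [tau_cyclicCoeffs_zero hr.pos]
    exact Submodule.subset_span (Set.mem_insert _ _)
  have hF1 : X ^ r - 1 ∣ F1 * Fh1.reverse := by
    refine X_pow_sub_one_dvd_mul_reverse hr.pos
      (sum_cyclicCoeffs_mul_eq_zero_of_mem_dualSet hr.pos hs.pos (g₂ := 0) (fun c => (hC c).2)
        ?_ hFh1)
    rw [mkQ_zero]
    exact Submodule.subset_span (Set.mem_insert _ _)
  have hl : X ^ r - 1 ∣ l * Fh1.reverse :=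
    X_pow_sub_one_dvd_mul_reverse hr.pos
      (sum_cyclicCoeffs_mul_eq_zero_of_mem_dualSet hr.pos hs.pos (fun c => (hC c).2)
        (Submodule.subset_span (Set.mem_insert_of_mem _ rfl)) hFh1)
  obtain ⟨lam, hlam⟩ : X ^ r - 1 ∣ Fh1.reverse * (a * F1 + b * l) := by
    rw [show Fh1.reverse * (a * F1 + b * l) = a * (F1 * Fh1.reverse) + b * (l * Fh1.reverse) by
      ring]
    exact dvd_add (hF1.mul_left a) (hl.mul_left b)
  exact ⟨lam, hlam.trans (mul_comm _ _)⟩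

/-- if `C = ((F1|0),(l|F2))` is a double cyclic code with dual
`C⊥ = ((F̂1|0),(l̂|F̂2))`, and `d = gcd(F1,l)` (a common divisor which is a
`Z4[x]`-combination of `F1` and `l`), then `F̂1*·gcd(F1,l)` is a multiple of `x^r−1`. -/
theorem stmt_12 (r s : ℕ) (hr : Odd r) (hs : Odd s)
    (F1 l F2 Fh1 lh Fh2 d : Polynomial Z4)
    (C : Set ((Fin r → Z4) × (Fin s → Z4)))
    (hC : ∀ c, c ∈ C ↔ tau c ∈ polyGen2 r s F1 l F2)
    (hdual : ∀ c, c ∈ dualSet C ↔ tau c ∈ polyGen2 r s Fh1 lh Fh2)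
    (hd1 : d ∣ F1) (hd2 : d ∣ l)
    (hbezout : ∃ a b : Polynomial Z4, d = a * F1 + b * l) :
    ∃ lam : Polynomial Z4, Fh1.reverse * d = lam * (X ^ r - 1) :=
  stmt_12_general r s hr hs F1 l F2 Fh1 lh Fh2 d C hC hdual hbezout
end

section
/- Let C = ((F1(x)|0),(l(x)|F2(x))) be a double cyclic code of length (r,s) over Z4 with dual C⊥ = ((F̂1(x)|0),(l̂(x)|F̂2(x))). Then l̂*(x)·F1(x) = ν(x)·(x^r−1) for some ν(x) ∈ Z4[x], i.e., l̂*(x)·F1(x) = 0 in Z4[x]/(x^r−1). -/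
open Polynomial

/-!
Write `a`, `b` for the coefficient words of `F1` and `l̂` modulo `x^r - 1`. Every cyclic shift
`(x^{-t} F1 | 0)` lies in `C`, so orthogonality to `(l̂ | F̂2) ∈ C⊥` says that all cyclic
correlations `∑ i, a (i + t) * b i` vanish. These correlations are the coefficients of
`l̂(x⁻¹) · F1(x)` in `Z4[x]/(x^r - 1)`, where `x` is a unit, so this product is zero; and
`l̂*(x) = x^(deg l̂) · l̂(x⁻¹)` there.
-/

section PowEqOne

variable {A : Type*} {n : ℕ} {x : A}

theorem pow_finVal_add [Monoid A] (hx : x ^ n = 1) (i j : Fin n) :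
    x ^ ((i + j : Fin n) : ℕ) = x ^ (i : ℕ) * x ^ (j : ℕ) := by
  rw [Fin.val_add, ← pow_eq_pow_mod _ hx, pow_add]

variable [CommRing A]

theorem aeval_reverse_mul_pow {R : Type*} [CommRing R] [Algebra R A] (hn : n ≠ 0)
    (hx : x ^ n = 1) (p : R[X]) :
    aeval x p.reverse * (x ^ (n - 1)) ^ p.natDegree = aeval (x ^ (n - 1)) p := by
  let _ : Invertible (x ^ (n - 1)) :=
    ⟨x, by rw [← pow_succ', Nat.sub_add_cancel (Nat.pos_of_ne_zero hn), hx],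
      by rw [pow_sub_one_mul hn, hx]⟩
  have hinv : ⅟(x ^ (n - 1)) = x := rfl
  simpa only [aeval_def, hinv] using eval₂_reverse_mul_pow (algebraMap R A) (x ^ (n - 1)) p

variable [Algebra Z4 A]

theorem aeval_toPoly (x : A) (c : Fin n → Z4) :
    aeval x (toPoly c) = ∑ i, c i • x ^ (i : ℕ) := by
  simp [toPoly, Algebra.smul_def]

theorem aeval_toPoly_comp_add [NeZero n] (hx : x ^ n = 1) (a : Fin n → Z4) (t : Fin n) :
    aeval x (toPoly fun i => a (i + t)) = (x ^ (n - 1)) ^ (t : ℕ) * aeval x (toPoly a) := by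
  have hshift : x ^ (t : ℕ) * aeval x (toPoly fun i => a (i + t)) = aeval x (toPoly a) := by
    simp only [aeval_toPoly, Finset.mul_sum, mul_smul_comm]
    exact Fintype.sum_equiv (Equiv.addRight t) _ _ fun i => by
      rw [Equiv.coe_addRight, pow_finVal_add hx, mul_comm]
  rw [← hshift, ← mul_assoc, ← mul_pow, pow_sub_one_mul (NeZero.ne n), hx, one_pow, one_mul]

theorem aeval_pow_pred_toPoly_mul [NeZero n] (hx : x ^ n = 1) (a b : Fin n → Z4) :
    aeval (x ^ (n - 1)) (toPoly b) * aeval x (toPoly a) =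
      aeval x (toPoly fun i => ∑ j, a (i + j) * b j) := by
  simp only [aeval_toPoly _ b, Finset.sum_mul, smul_mul_assoc, ← aeval_toPoly_comp_add hx]
  simp only [aeval_toPoly, Finset.smul_sum, smul_smul, Finset.sum_smul]
  rw [Finset.sum_comm]
  simp only [mul_comm]

end PowEqOne

section Quotient

theorem mkQ_X_pow_self (n : ℕ) : mkQ n X ^ n = 1 := by
  rw [← sub_eq_zero, mkQ, ← map_pow, ← map_one (Ideal.Quotient.mk _), ← map_sub,
    Ideal.Quotient.mk_singleton_self]

theorem mkQ_eq_aeval (n : ℕ) (p : Z4[X]) : mkQ n p = aeval (mkQ n X) p := by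
  rw [mkQ, mkQ, ← Ideal.Quotient.mkₐ_eq_mk Z4, aeval_algHom_apply, aeval_X_left_apply]

theorem mkQ_mul (n : ℕ) (p q : Z4[X]) : mkQ n (p * q) = mkQ n p * mkQ n q :=
  map_mul _ p q

variable {n : ℕ}

theorem aeval_eq_of_mkQ_eq {A : Type*} [CommRing A] [Algebra Z4 A] {y : A} (hy : y ^ n = 1)
    {p q : Z4[X]} (h : mkQ n p = mkQ n q) : aeval y p = aeval y q := by
  obtain ⟨k, hk⟩ := Ideal.mem_span_singleton.1 (Ideal.Quotient.eq.1 h)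
  rw [← sub_eq_zero, ← map_sub, hk, map_mul, map_sub, map_pow, aeval_X, hy, map_one, sub_self,
    zero_mul]

theorem toPoly_coeff {p : Z4[X]} (hp : p.degree < n) : toPoly (fun i : Fin n => p.coeff i) = p := by
  rw [toPoly, sum_fin (fun e a => C a * X ^ e) (by simp) hp, sum_C_mul_X_pow_eq]

theorem exists_mkQ_toPoly_eq (hn : n ≠ 0) (p : Z4[X]) :
    ∃ c : Fin n → Z4, mkQ n (toPoly c) = mkQ n p := by
  have : Fact (1 < 4) := ⟨by norm_num⟩
  have hXn : (X ^ n - 1 : Z4[X]) = X ^ n - C 1 := by rw [C_1]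
  have hdeg : (p %ₘ (X ^ n - 1)).degree < n := by
    rw [hXn, ← degree_X_pow_sub_C (Nat.pos_of_ne_zero hn) (1 : Z4)]
    exact degree_modByMonic_lt p (monic_X_pow_sub_C 1 hn)
  refine ⟨fun i => (p %ₘ (X ^ n - 1)).coeff i, ?_⟩
  rw [toPoly_coeff hdeg]
  exact Ideal.Quotient.eq.2 <| Ideal.mem_span_singleton.2
    ⟨-(p /ₘ (X ^ n - 1)), by rw [modByMonic_eq_sub_mul_div]; ring⟩

theorem mkQ_reverse_mul_eq_zero [NeZero n] {a b : Fin n → Z4} {p q : Z4[X]}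
    (ha : mkQ n (toPoly a) = mkQ n q) (hb : mkQ n (toPoly b) = mkQ n p)
    (horth : ∀ t, ∑ i, a (i + t) * b i = 0) : mkQ n (p.reverse * q) = 0 := by
  set x := mkQ n X
  have hx : x ^ n = 1 := mkQ_X_pow_self n
  have hu : (x ^ (n - 1)) ^ n = 1 := by rw [← pow_mul, mul_comm, pow_mul, hx, one_pow]
  have hcorr : aeval (x ^ (n - 1)) p * mkQ n q = 0 := by
    have hzero : (fun i => ∑ j, a (i + j) * b j) = 0 :=
      funext fun i => (Finset.sum_congr rfl fun j _ => by rw [add_comm]).trans (horth i)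
    rw [← aeval_eq_of_mkQ_eq hu hb, ← ha, mkQ_eq_aeval n (toPoly a),
      aeval_pow_pred_toPoly_mul hx, hzero]
    simp [toPoly]
  have hunit : IsUnit ((x ^ (n - 1)) ^ p.natDegree) :=
    (IsUnit.of_mul_eq_one x (by rw [pow_sub_one_mul (NeZero.ne n), hx])).pow _
  rw [mkQ_mul, ← hunit.mul_left_eq_zero, mul_right_comm, mkQ_eq_aeval n p.reverse,
    aeval_reverse_mul_pow (NeZero.ne n) hx, hcorr]

end Quotient

theorem tau_comp_add_zero {r s : ℕ} [NeZero r] (a : Fin r → Z4) (t : Fin r) :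
    tau ((fun i => a (i + t)), (0 : Fin s → Z4)) =
      ((X ^ (r - 1)) ^ (t : ℕ) : Z4[X]) • (mkQ r (toPoly a), (0 : Rq s)) := by
  refine Prod.ext ?_ ?_
  · change mkQ r _ = _ • mkQ r _
    rw [mkQ_eq_aeval, aeval_toPoly_comp_add (mkQ_X_pow_self r), ← mkQ_eq_aeval]
    rfl
  · simp [tau, toPoly, mkQ]

theorem innerProd_zero_left {r s : ℕ} (a b : Fin r → Z4) (b₂ : Fin s → Z4) :
    innerProd (a, 0) (b, b₂) = ∑ i, a i * b i := by
  simp [innerProd]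

/-- with `C = ((F1|0),(l|F2))` and dual `C⊥ = ((F̂1|0),(l̂|F̂2))`,
one has `l̂*·F1 = ν·(x^r−1)` for some `ν ∈ Z4[x]`, i.e. `l̂*·F1 = 0` in `Z4[x]/(x^r−1)`. -/
theorem stmt_14 (r s : ℕ) (hr : Odd r) (hs : Odd s)
    (F1 l F2 Fh1 lh Fh2 : Polynomial Z4)
    (C : Set ((Fin r → Z4) × (Fin s → Z4)))
    (hC : ∀ c, c ∈ C ↔ tau c ∈ polyGen2 r s F1 l F2)
    (hdual : ∀ c, c ∈ dualSet C ↔ tau c ∈ polyGen2 r s Fh1 lh Fh2) :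
    (∃ ν : Polynomial Z4, lh.reverse * F1 = ν * (X ^ r - 1)) ∧
      mkQ r (lh.reverse * F1) = 0 := by
  have : NeZero r := ⟨hr.pos.ne'⟩
  obtain ⟨a, ha⟩ := exists_mkQ_toPoly_eq hr.pos.ne' F1
  obtain ⟨b, hb⟩ := exists_mkQ_toPoly_eq hr.pos.ne' lh
  obtain ⟨b₂, hb₂⟩ := exists_mkQ_toPoly_eq hs.pos.ne' Fh2
  have hdualWord : ∀ c ∈ C, innerProd c (b, b₂) = 0 := (hdual _).2 <| by
    simp only [tau, hb, hb₂]
    exact Submodule.subset_span (by simp)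
  have horth : ∀ t, ∑ i, a (i + t) * b i = 0 := fun t => by
    have hshift : ((fun i => a (i + t)), (0 : Fin s → Z4)) ∈ C := (hC _).2 <| by
      rw [tau_comp_add_zero, ha]
      exact Submodule.smul_mem _ _ (Submodule.subset_span (by simp))
    simpa only [innerProd_zero_left] using hdualWord _ hshift
  have hzero := mkQ_reverse_mul_eq_zero ha hb horth
  obtain ⟨ν, hν⟩ := Ideal.mem_span_singleton.1 (Ideal.Quotient.eq_zero_iff_mem.1 hzero)
  exact ⟨⟨ν, by rw [hν, mul_comm]⟩, hzero⟩
end
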